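/- Lower bound on entanglement robustness for symmetric GPTs: with symmetric GPTs as above and z ∈ X1 ⊗ X2 with injective norm ‖z‖_{X1 ⊗_ε X2} ≤ 1, the state ω(z) := γ1 ⊗ γ2 + z belongs to C1 ⊛ C2, and its entanglement robustness satisfies E_rob(ω(z)) ≥ (‖z‖_{X1 ⊗_π X2} − 1)/2. -/

import Mathlib

open scoped TensorProduct
open TensorProduct

section Defs

variable {V V' V1 V2 : Type*}
  [AddCommGroup V] [Module ℝ V] [AddCommGroup V'] [Module ℝ V']
  [AddCommGroup V1] [Module ℝ V1] [AddCommGroup V2] [Module ℝ V2]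

/-- The dual cone of a set `C`: linear functionals nonnegative on `C`. -/
def dualCone (C : Set V) : Set (Module.Dual ℝ V) := {f | ∀ x ∈ C, 0 ≤ f x}

/-- The functional `f ⊗ g` on `V1 ⊗ V2`. -/
noncomputable def pairTensor (f : Module.Dual ℝ V1) (g : Module.Dual ℝ V2) :
    Module.Dual ℝ (V1 ⊗[ℝ] V2) :=
  (TensorProduct.lid ℝ ℝ).toLinearMap ∘ₗ TensorProduct.map f g

/-- The minimal tensor product of two cones: the convex hull of the product tensors. -/
def minTensor (C1 : Set V1) (C2 : Set V2) : Set (V1 ⊗[ℝ] V2) :=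
  convexHull ℝ {z | ∃ x ∈ C1, ∃ y ∈ C2, z = x ⊗ₜ[ℝ] y}

/-- The maximal tensor product of two cones: tensors nonnegative on product functionals. -/
def maxTensor (C1 : Set V1) (C2 : Set V2) : Set (V1 ⊗[ℝ] V2) :=
  {z | ∀ f ∈ dualCone C1, ∀ g ∈ dualCone C2, 0 ≤ pairTensor f g z}

/-- A cone: a set closed under multiplication by nonnegative scalars. -/
def IsConeSet (C : Set V) : Prop := ∀ x ∈ C, ∀ a : ℝ, 0 ≤ a → a • x ∈ C

/-- Topological closedness of a subset of a finite-dimensional real vector space,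
expressed through (all) linear identifications with `Fin n → ℝ`. -/
def IsClosedSet (C : Set V) : Prop := ∀ (n : ℕ) (e : V ≃ₗ[ℝ] (Fin n → ℝ)), IsClosed (e '' C)

/-- A proper cone: convex, closed, salient and generating. -/
def IsProperCone (C : Set V) : Prop :=
  Convex ℝ C ∧ IsClosedSet C ∧ IsConeSet C ∧ C ∩ (-C) = {0} ∧ Submodule.span ℝ C = ⊤

/-- A classical cone: the set of vectors with nonnegative coordinates in some basis,
i.e. the cone generated by a basis of the space. -/
def IsClassicalCone (C : Set V) : Prop :=
  ∃ (ι : Type) (b : Module.Basis ι ℝ V), C = {x | ∀ i, 0 ≤ b.repr x i}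

/-- `C'` is a retract of `C` if there are positive maps `Φ, Ψ` with `Φ ∘ Ψ = id`. -/
def IsRetractOf (C' : Set V') (C : Set V) : Prop :=
  ∃ (Φ : V →ₗ[ℝ] V') (Ψ : V' →ₗ[ℝ] V),
    (∀ x ∈ C, Φ x ∈ C') ∧ (∀ y ∈ C', Ψ y ∈ C) ∧ Φ ∘ₗ Ψ = LinearMap.id

/-- A polyhedral cone: the conical hull of finitely many vectors. -/
def IsPolyhedralCone (C : Set V) : Prop :=
  ∃ (k : ℕ) (v : Fin k → V),
    C = {x | ∃ c : Fin k → ℝ, (∀ i, 0 ≤ c i) ∧ x = ∑ i, c i • v i}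

end Defs

/-- The gauge function of a cone `C` with respect to a base point `γ`:
`N(x) = inf { t > 0 : γ + t⁻¹ x ∈ C }`. -/
noncomputable def gaugeN {V : Type*} [AddCommGroup V] [Module ℝ V]
    (C : Set V) (γ : V) (x : V) : ℝ :=
  sInf {t : ℝ | 0 < t ∧ γ + t⁻¹ • x ∈ C}

/-- The projective tensor norm of `z` relative to subsets `X1, X2` and gauge
functions `N1, N2`: the infimum of `Σᵢ N1(xᵢ)·N2(yᵢ)` over decompositions
`z = Σᵢ xᵢ ⊗ yᵢ` with `xᵢ ∈ X1`, `yᵢ ∈ X2`. -/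
noncomputable def projNormOn {V1 V2 : Type*} [AddCommGroup V1] [Module ℝ V1]
    [AddCommGroup V2] [Module ℝ V2]
    (X1 : Set V1) (X2 : Set V2) (N1 : V1 → ℝ) (N2 : V2 → ℝ) (z : V1 ⊗[ℝ] V2) : ℝ :=
  sInf {s : ℝ | ∃ (k : ℕ) (x : Fin k → V1) (y : Fin k → V2),
    (∀ i, x i ∈ X1) ∧ (∀ i, y i ∈ X2) ∧ z = ∑ i, x i ⊗ₜ[ℝ] y i ∧
    s = ∑ i, N1 (x i) * N2 (y i)}

/-- The injective tensor norm of `z` relative to subsets `X1, X2` and gauge functions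
`N1, N2`: the supremum of `(f ⊗ g)(z)` over functionals `f, g` lying in the dual unit
balls of the corresponding gauges. -/
noncomputable def injNormOn {V1 V2 : Type*} [AddCommGroup V1] [Module ℝ V1]
    [AddCommGroup V2] [Module ℝ V2]
    (X1 : Set V1) (X2 : Set V2) (N1 : V1 → ℝ) (N2 : V2 → ℝ) (z : V1 ⊗[ℝ] V2) : ℝ :=
  sSup {r : ℝ | ∃ (f : Module.Dual ℝ V1) (g : Module.Dual ℝ V2),
    (∀ x ∈ X1, f x ≤ N1 x) ∧ (∀ y ∈ X2, g y ≤ N2 y) ∧ r = pairTensor f g z}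

/-- The entanglement robustness of `ω`: the least value of `(u1⊗u2)(ζ)` over `ζ` in the
minimal tensor product such that `ω + ζ` is also in the minimal tensor product. -/
noncomputable def entRob {V1 V2 : Type*} [AddCommGroup V1] [Module ℝ V1]
    [AddCommGroup V2] [Module ℝ V2]
    (C1 : Set V1) (C2 : Set V2) (u1 : Module.Dual ℝ V1) (u2 : Module.Dual ℝ V2)
    (ω : V1 ⊗[ℝ] V2) : ℝ :=
  sInf {r : ℝ | ∃ ζ ∈ minTensor C1 C2,
    ω + ζ ∈ minTensor C1 C2 ∧ r = pairTensor u1 u2 ζ}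


/-! On `ker u` the gauge `N` of `C` at `γ` is even, by the symmetry of `C` about `γ`, and every
functional `f ≥ 0` on `C` satisfies `-f v ≤ f(γ) N(v)`; hence
`(f ⊗ g)(γ1 ⊗ γ2 + z) ≥ f(γ1) g(γ2) (1 - ‖z‖_ε) ≥ 0`. For robustness, `Π1 ⊗ Π2` sends a separable
`ω` to a tensor of projective norm at most `(u1 ⊗ u2)(ω)`, since `N(Π a) ≤ u(a)` for `a ∈ C`.
Applied to `ω + ζ` and `ζ`, whose images differ by `z`, this gives `‖z‖_π ≤ (1 + r) + r` with
`r = (u1 ⊗ u2)(ζ)`. The minimisation is feasible because generating cones make every tensor a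
difference of two separable ones. -/

open scoped Pointwise

section Cones

variable {V : Type*} [AddCommGroup V] [Module ℝ V] {C : Set V}

theorem IsConeSet.add_mem (hcone : IsConeSet C) (hconv : Convex ℝ C) {x y : V}
    (hx : x ∈ C) (hy : y ∈ C) : x + y ∈ C := by
  have hmid := hconv hx hy (by norm_num : (0 : ℝ) ≤ 1 / 2) (by norm_num : (0 : ℝ) ≤ 1 / 2)
    (by norm_num)
  convert hcone _ hmid 2 (by norm_num) using 1
  module

theorem IsConeSet.sub_eq_univ (hcone : IsConeSet C) (hconv : Convex ℝ C) (h0 : (0 : V) ∈ C)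
    (hspan : Submodule.span ℝ C = ⊤) : C - C = Set.univ := by
  cases subsingleton_or_nontrivial V
  · exact Set.eq_univ_of_forall fun x => ⟨0, h0, 0, h0, Subsingleton.elim _ _⟩
  · let K : ConvexCone ℝ V :=
      ⟨C, fun c hc x hx => hcone x hx c hc.le, fun x hx y hy => hcone.add_mem hconv hx hy⟩
    exact ConvexCone.IsReproducing.of_span_eq_top (C := K) hspan

end Cones

section Tensor

variable {V1 V2 : Type*} [AddCommGroup V1] [Module ℝ V1] [AddCommGroup V2] [Module ℝ V2]

@[simp]
theorem pairTensor_tmul (f : Module.Dual ℝ V1) (g : Module.Dual ℝ V2) (x : V1) (y : V2) :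
    pairTensor f g (x ⊗ₜ[ℝ] y) = f x * g y := by
  simp [pairTensor]

theorem pairTensor_neg_left (f : Module.Dual ℝ V1) (g : Module.Dual ℝ V2) (z : V1 ⊗[ℝ] V2) :
    pairTensor (-f) g z = -pairTensor f g z := by
  induction z using TensorProduct.induction_on <;> simp_all [add_comm]

variable {C1 : Set V1} {C2 : Set V2}

theorem tmul_mem_minTensor {x : V1} {y : V2} (hx : x ∈ C1) (hy : y ∈ C2) :
    x ⊗ₜ[ℝ] y ∈ minTensor C1 C2 :=
  subset_convexHull ℝ _ ⟨x, hx, y, hy, rfl⟩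

theorem IsConeSet.minTensor (hcone : IsConeSet C1) : IsConeSet (minTensor C1 C2) := by
  intro w hw c hc
  have hw' : c • w ∈ convexHull ℝ (c • {z | ∃ x ∈ C1, ∃ y ∈ C2, z = x ⊗ₜ[ℝ] y}) := by
    rw [convexHull_smul]
    exact Set.smul_mem_smul_set hw
  refine convexHull_mono ?_ hw'
  rintro _ ⟨_, ⟨x, hx, y, hy, rfl⟩, rfl⟩
  exact ⟨c • x, hcone x hx c hc, y, hy, (smul_tmul' c x y).symm⟩

theorem minTensor_add_mem (hcone : IsConeSet C1) {w w' : V1 ⊗[ℝ] V2}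
    (hw : w ∈ minTensor C1 C2) (hw' : w' ∈ minTensor C1 C2) : w + w' ∈ minTensor C1 C2 :=
  hcone.minTensor.add_mem (convex_convexHull ℝ _) hw hw'

theorem minTensor_sub_eq_univ (hcone : IsConeSet C1) (h1 : C1 - C1 = Set.univ)
    (h2 : C2 - C2 = Set.univ) : minTensor C1 C2 - minTensor C1 C2 = Set.univ := by
  have htmul : ∀ (x : V1) (y : V2), x ⊗ₜ[ℝ] y ∈ minTensor C1 C2 - minTensor C1 C2 := by
    intro x y
    obtain ⟨a, ha, a', ha', rfl⟩ : x ∈ C1 - C1 := h1 ▸ trivial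
    obtain ⟨b, hb, b', hb', rfl⟩ : y ∈ C2 - C2 := h2 ▸ trivial
    refine ⟨a ⊗ₜ b + a' ⊗ₜ b', minTensor_add_mem hcone (tmul_mem_minTensor ha hb)
      (tmul_mem_minTensor ha' hb'), a ⊗ₜ b' + a' ⊗ₜ b, minTensor_add_mem hcone
      (tmul_mem_minTensor ha hb') (tmul_mem_minTensor ha' hb), ?_⟩
    simp only [sub_tmul, tmul_sub]
    abel
  refine Set.eq_univ_of_forall fun w => ?_
  induction w using TensorProduct.induction_on with
  | zero => simpa using htmul 0 0
  | tmul x y => exact htmul x y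
  | add w w' hw hw' =>
    obtain ⟨P, hP, Q, hQ, rfl⟩ := hw
    obtain ⟨P', hP', Q', hQ', rfl⟩ := hw'
    exact ⟨P + P', minTensor_add_mem hcone hP hP', Q + Q', minTensor_add_mem hcone hQ hQ',
      add_sub_add_comm ..⟩

end Tensor

section Decompositions

variable {V1 V2 : Type*} [AddCommGroup V1] [Module ℝ V1] [AddCommGroup V2] [Module ℝ V2]
  {X1 : Set V1} {X2 : Set V2} {N1 : V1 → ℝ} {N2 : V2 → ℝ} {z z' : V1 ⊗[ℝ] V2} {s s' : ℝ}

/-- A decomposition witnessing `projNormOn X1 X2 N1 N2 z ≤ s` (for `N1, N2 ≥ 0`). -/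
def HasProjDecompLE (X1 : Set V1) (X2 : Set V2) (N1 : V1 → ℝ) (N2 : V2 → ℝ)
    (z : V1 ⊗[ℝ] V2) (s : ℝ) : Prop :=
  ∃ (k : ℕ) (x : Fin k → V1) (y : Fin k → V2), (∀ i, x i ∈ X1) ∧ (∀ i, y i ∈ X2) ∧
    z = ∑ i, x i ⊗ₜ[ℝ] y i ∧ ∑ i, N1 (x i) * N2 (y i) ≤ s

namespace HasProjDecompLE

theorem projNormOn_le (h : HasProjDecompLE X1 X2 N1 N2 z s) (hN1 : ∀ x, 0 ≤ N1 x)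
    (hN2 : ∀ y, 0 ≤ N2 y) : projNormOn X1 X2 N1 N2 z ≤ s := by
  obtain ⟨k, x, y, hx, hy, hz, hs⟩ := h
  have hbdd : BddBelow {s : ℝ | ∃ (k : ℕ) (x : Fin k → V1) (y : Fin k → V2),
      (∀ i, x i ∈ X1) ∧ (∀ i, y i ∈ X2) ∧ z = ∑ i, x i ⊗ₜ[ℝ] y i ∧
      s = ∑ i, N1 (x i) * N2 (y i)} := by
    refine ⟨0, ?_⟩
    rintro _ ⟨_, x', y', -, -, -, rfl⟩
    exact Finset.sum_nonneg fun i _ => mul_nonneg (hN1 _) (hN2 _)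
  exact (csInf_le hbdd ⟨k, x, y, hx, hy, hz, rfl⟩).trans hs

theorem add (h : HasProjDecompLE X1 X2 N1 N2 z s) (h' : HasProjDecompLE X1 X2 N1 N2 z' s') :
    HasProjDecompLE X1 X2 N1 N2 (z + z') (s + s') := by
  obtain ⟨k, x, y, hx, hy, rfl, hs⟩ := h
  obtain ⟨k', x', y', hx', hy', rfl, hs'⟩ := h'
  refine ⟨k + k', Fin.append x x', Fin.append y y', fun i => ?_, fun i => ?_,
    by simp [Fin.sum_univ_add], ?_⟩
  · exact Fin.addCases (by simpa using hx) (by simpa using hx') i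
  · exact Fin.addCases (by simpa using hy) (by simpa using hy') i
  · simp only [Fin.sum_univ_add, Fin.append_left, Fin.append_right]
    linarith

theorem smul {c : ℝ} (hc : 0 ≤ c) (hX1 : ∀ x ∈ X1, c • x ∈ X1)
    (hN1 : ∀ x ∈ X1, N1 (c • x) = c * N1 x) (h : HasProjDecompLE X1 X2 N1 N2 z s) :
    HasProjDecompLE X1 X2 N1 N2 (c • z) (c * s) := by
  obtain ⟨k, x, y, hx, hy, rfl, hs⟩ := h
  refine ⟨k, fun i => c • x i, y, fun i => hX1 _ (hx i), hy,
    by simp [Finset.smul_sum, smul_tmul'], ?_⟩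
  simp only [hN1 _ (hx _), mul_assoc, ← Finset.mul_sum]
  exact mul_le_mul_of_nonneg_left hs hc

theorem neg (hX1 : ∀ x ∈ X1, -x ∈ X1 ∧ N1 (-x) = N1 x) (h : HasProjDecompLE X1 X2 N1 N2 z s) :
    HasProjDecompLE X1 X2 N1 N2 (-z) s := by
  obtain ⟨k, x, y, hx, hy, rfl, hs⟩ := h
  refine ⟨k, fun i => -x i, y, fun i => (hX1 _ (hx i)).1, hy,
    by simp [← Finset.sum_neg_distrib, neg_tmul], ?_⟩
  simpa only [(hX1 _ (hx _)).2] using hs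

end HasProjDecompLE

theorem abs_apply_le_of_forall_apply_le {f : Module.Dual ℝ V1}
    (hX1 : ∀ x ∈ X1, -x ∈ X1 ∧ N1 (-x) = N1 x) (hf : ∀ x ∈ X1, f x ≤ N1 x) :
    ∀ x ∈ X1, |f x| ≤ N1 x := by
  intro x hx
  have hneg := hf _ (hX1 x hx).1
  rw [map_neg, (hX1 x hx).2] at hneg
  exact abs_le.2 ⟨by linarith, hf x hx⟩

theorem HasProjDecompLE.pairTensor_le (h : HasProjDecompLE X1 X2 N1 N2 z s)
    (hX1 : ∀ x ∈ X1, -x ∈ X1 ∧ N1 (-x) = N1 x) (hX2 : ∀ y ∈ X2, -y ∈ X2 ∧ N2 (-y) = N2 y)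
    {f : Module.Dual ℝ V1} {g : Module.Dual ℝ V2}
    (hf : ∀ x ∈ X1, f x ≤ N1 x) (hg : ∀ y ∈ X2, g y ≤ N2 y) : pairTensor f g z ≤ s := by
  obtain ⟨k, x, y, hx, hy, rfl, hs⟩ := h
  simp only [map_sum, pairTensor_tmul]
  refine (Finset.sum_le_sum fun i _ => ?_).trans hs
  have hfx := abs_apply_le_of_forall_apply_le hX1 hf _ (hx i)
  have hgy := abs_apply_le_of_forall_apply_le hX2 hg _ (hy i)
  calc f (x i) * g (y i) ≤ |f (x i)| * |g (y i)| := (le_abs_self _).trans (abs_mul _ _).le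
    _ ≤ N1 (x i) * N2 (y i) := mul_le_mul hfx hgy (abs_nonneg _) ((abs_nonneg _).trans hfx)

theorem HasProjDecompLE.pairTensor_eq_zero (h : HasProjDecompLE X1 X2 N1 N2 z s)
    {f : Module.Dual ℝ V1} {g : Module.Dual ℝ V2}
    (hfg : (∀ x ∈ X1, f x = 0) ∨ ∀ y ∈ X2, g y = 0) : pairTensor f g z = 0 := by
  obtain ⟨k, x, y, hx, hy, rfl, -⟩ := h
  rcases hfg with hf | hg
  · simp [hf _ (hx _)]
  · simp [hg _ (hy _)]

theorem HasProjDecompLE.pairTensor_le_mul_injNormOn (h : HasProjDecompLE X1 X2 N1 N2 z s)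
    (hX1 : ∀ x ∈ X1, -x ∈ X1 ∧ N1 (-x) = N1 x) (hX2 : ∀ y ∈ X2, -y ∈ X2 ∧ N2 (-y) = N2 y)
    {f : Module.Dual ℝ V1} {g : Module.Dual ℝ V2} {a b : ℝ} (ha : 0 ≤ a) (hb : 0 ≤ b)
    (hf : ∀ x ∈ X1, f x ≤ a * N1 x) (hg : ∀ y ∈ X2, g y ≤ b * N2 y) :
    pairTensor f g z ≤ a * b * injNormOn X1 X2 N1 N2 z := by
  rcases ha.eq_or_lt with rfl | ha
  · refine le_of_eq_of_le (h.pairTensor_eq_zero (.inl fun x hx => le_antisymm ?_ ?_)) (by simp)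
    · simpa using hf x hx
    · simpa using hf _ (hX1 x hx).1
  rcases hb.eq_or_lt with rfl | hb
  · refine le_of_eq_of_le (h.pairTensor_eq_zero (.inr fun y hy => le_antisymm ?_ ?_)) (by simp)
    · simpa using hg y hy
    · simpa using hg _ (hX2 y hy).1
  have hbdd : BddAbove {r | ∃ (f : Module.Dual ℝ V1) (g : Module.Dual ℝ V2),
      (∀ x ∈ X1, f x ≤ N1 x) ∧ (∀ y ∈ X2, g y ≤ N2 y) ∧ r = pairTensor f g z} := by
    refine ⟨s, ?_⟩
    rintro _ ⟨f, g, hf, hg, rfl⟩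
    exact h.pairTensor_le hX1 hX2 hf hg
  have hscaled : pairTensor (a⁻¹ • f) (b⁻¹ • g) z ≤ injNormOn X1 X2 N1 N2 z := by
    refine le_csSup hbdd ⟨_, _, fun x hx => ?_, fun y hy => ?_, rfl⟩
    · rw [LinearMap.smul_apply, smul_eq_mul, inv_mul_le_iff₀ ha]
      exact hf x hx
    · rw [LinearMap.smul_apply, smul_eq_mul, inv_mul_le_iff₀ hb]
      exact hg y hy
  have hsmul : pairTensor (a⁻¹ • f) (b⁻¹ • g) z = (a * b)⁻¹ * pairTensor f g z := by
    simp [pairTensor, map_smul_left, map_smul_right, mul_assoc]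
  rwa [hsmul, inv_mul_le_iff₀ (mul_pos ha hb)] at hscaled

end Decompositions

section Gauge

variable {V : Type*} [AddCommGroup V] [Module ℝ V] {C : Set V} {γ x : V}

theorem gaugeN_eq_gauge (C : Set V) (γ : V) : gaugeN C γ = gauge {v | γ + v ∈ C} := by
  funext x
  rw [gauge_def']
  rfl

theorem gaugeN_nonneg (C : Set V) (γ x : V) : 0 ≤ gaugeN C γ x := by
  rw [gaugeN_eq_gauge]
  exact gauge_nonneg x

theorem gaugeN_zero (C : Set V) (γ : V) : gaugeN C γ 0 = 0 := by
  rw [gaugeN_eq_gauge, gauge_zero]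

theorem gaugeN_smul {c : ℝ} (hc : 0 ≤ c) (x : V) : gaugeN C γ (c • x) = c * gaugeN C γ x := by
  rw [gaugeN_eq_gauge, gauge_smul_of_nonneg hc, smul_eq_mul]

theorem gaugeN_le_of_mem {t : ℝ} (ht : 0 < t) (h : γ + t⁻¹ • x ∈ C) : gaugeN C γ x ≤ t :=
  csInf_le ⟨0, fun _ hs => hs.1.le⟩ ⟨ht, h⟩

theorem neg_apply_le_mul_gaugeN {f : Module.Dual ℝ V} (hf : f ∈ dualCone C) (hγ : γ ∈ C)
    (hx : ∃ t : ℝ, 0 < t ∧ γ + t • x ∈ C) : -f x ≤ f γ * gaugeN C γ x := by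
  obtain ⟨t, ht, htx⟩ := hx
  rw [gaugeN, ← smul_eq_mul, ← Real.sInf_smul_of_nonneg (hf γ hγ)]
  refine le_csInf ⟨f γ • t⁻¹, t⁻¹, ⟨inv_pos.2 ht, by rwa [inv_inv]⟩, rfl⟩ ?_
  rintro _ ⟨s, ⟨hs, hsx⟩, rfl⟩
  have hpos := mul_nonneg hs.le (hf _ hsx)
  rw [map_add, map_smul, smul_eq_mul, mul_add, mul_inv_cancel_left₀ hs.ne'] at hpos
  change -f x ≤ f γ * s
  linarith

end Gauge

section KerProj

variable {V : Type*} [AddCommGroup V] [Module ℝ V] {C : Set V} {u : Module.Dual ℝ V} {γ : V}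
  {V1 V2 : Type*} [AddCommGroup V1] [Module ℝ V1] [AddCommGroup V2] [Module ℝ V2]
  {u1 : Module.Dual ℝ V1} {u2 : Module.Dual ℝ V2} {γ1 : V1} {γ2 : V2}

/-- The projection `Π` of the paper, onto `ker u` along `γ`. -/
noncomputable def kerProj (u : Module.Dual ℝ V) (γ : V) : V →ₗ[ℝ] V :=
  LinearMap.id - u.smulRight γ

@[simp]
theorem kerProj_apply (x : V) : kerProj u γ x = x - u x • γ := rfl

theorem apply_kerProj (hγ : u γ = 1) (x : V) : u (kerProj u γ x) = 0 := by
  simp [hγ]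

theorem gaugeN_kerProj_le (hcone : IsConeSet C) (hu : ∀ x ∈ C, x ≠ 0 → 0 < u x) {a : V}
    (ha : a ∈ C) : gaugeN C γ (kerProj u γ a) ≤ u a := by
  rcases eq_or_ne a 0 with rfl | ha0
  · simp [gaugeN_zero]
  have hua := hu a ha ha0
  refine gaugeN_le_of_mem hua ?_
  convert hcone a ha (u a)⁻¹ (inv_nonneg.2 hua.le) using 1
  rw [kerProj_apply, smul_sub, smul_smul, inv_mul_cancel₀ hua.ne', one_smul]
  abel

theorem HasProjDecompLE.map_kerProj {N1 : V1 → ℝ} {N2 : V2 → ℝ} {z : V1 ⊗[ℝ] V2} {s : ℝ}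
    (h : HasProjDecompLE {x | u1 x = 0} {y | u2 y = 0} N1 N2 z s) :
    map (kerProj u1 γ1) (kerProj u2 γ2) z = z := by
  obtain ⟨k, x, y, hx, hy, rfl, -⟩ := h
  simp_all [map_sum]

theorem pairTensor_map_kerProj (hγ1 : u1 γ1 = 1) (hγ2 : u2 γ2 = 1) (w : V1 ⊗[ℝ] V2) :
    pairTensor u1 u2 (map (kerProj u1 γ1) (kerProj u2 γ2) w) = 0 := by
  induction w using TensorProduct.induction_on <;> simp_all

end KerProj

structure IsSymmetricGPT {V : Type*} [AddCommGroup V] [Module ℝ V]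
    (C : Set V) (u : Module.Dual ℝ V) (γ : V) : Prop where
  convex : Convex ℝ C
  isConeSet : IsConeSet C
  span_eq_top : Submodule.span ℝ C = ⊤
  pos : ∀ x ∈ C, x ≠ 0 → 0 < u x
  center_mem : γ ∈ C
  apply_center : u γ = 1
  reflect_mem : ∀ ω ∈ C, u ω = 1 → (2 : ℝ) • γ - ω ∈ C

namespace IsSymmetricGPT

section Single

variable {V : Type*} [AddCommGroup V] [Module ℝ V] {C : Set V} {u : Module.Dual ℝ V} {γ : V}

theorem exists_pos_sub_smul_mem (G : IsSymmetricGPT C u γ) {b : V} (hb : b ∈ C) :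
    ∃ s : ℝ, 0 < s ∧ γ - s • b ∈ C := by
  rcases eq_or_ne b 0 with rfl | hb0
  · exact ⟨1, one_pos, by simpa using G.center_mem⟩
  have hub := G.pos b hb hb0
  have hrefl := G.reflect_mem _ (G.isConeSet b hb (u b)⁻¹ (inv_nonneg.2 hub.le))
    (by rw [map_smul, smul_eq_mul, inv_mul_cancel₀ hub.ne'])
  refine ⟨(2 * u b)⁻¹, by positivity, ?_⟩
  convert G.isConeSet _ hrefl (1 / 2) (by norm_num) using 1
  rw [smul_sub, smul_smul, smul_smul, mul_inv]
  norm_num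

theorem zero_mem (G : IsSymmetricGPT C u γ) : (0 : V) ∈ C := by
  simpa using G.isConeSet γ G.center_mem 0 le_rfl

theorem sub_eq_univ (G : IsSymmetricGPT C u γ) : C - C = Set.univ :=
  G.isConeSet.sub_eq_univ G.convex G.zero_mem G.span_eq_top

theorem exists_pos_add_smul_mem (G : IsSymmetricGPT C u γ) (x : V) :
    ∃ t : ℝ, 0 < t ∧ γ + t • x ∈ C := by
  obtain ⟨a, ha, b, hb, rfl⟩ : x ∈ C - C := G.sub_eq_univ ▸ trivial
  obtain ⟨s, hs, hsb⟩ := G.exists_pos_sub_smul_mem hb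
  have hsa : γ + s • a ∈ C := G.isConeSet.add_mem G.convex G.center_mem (G.isConeSet a ha s hs.le)
  refine ⟨s / 2, by positivity, ?_⟩
  convert G.convex hsa hsb (by norm_num : (0 : ℝ) ≤ 1 / 2) (by norm_num : (0 : ℝ) ≤ 1 / 2)
    (by norm_num) using 1
  module

theorem sub_mem_of_add_mem (G : IsSymmetricGPT C u γ) {x : V} (hx : u x = 0)
    (h : γ + x ∈ C) : γ - x ∈ C := by
  convert G.reflect_mem _ h (by simp [G.apply_center, hx]) using 1
  module

theorem gaugeN_neg (G : IsSymmetricGPT C u γ) {x : V} (hx : u x = 0) :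
    gaugeN C γ (-x) = gaugeN C γ x := by
  have hneg : ∀ y : V, u y = 0 → ∀ t : ℝ, γ + t • -y ∈ C → γ + t • y ∈ C := fun y hy t h => by
    simpa [← sub_eq_add_neg] using G.sub_mem_of_add_mem (by simp [hy]) h
  unfold gaugeN
  congr 1
  ext t
  exact and_congr_right fun _ => ⟨hneg x hx _, fun h => hneg (-x) (by simp [hx]) _ (by simpa)⟩

theorem neg_mem_and_gaugeN_neg (G : IsSymmetricGPT C u γ) :
    ∀ x ∈ {x | u x = 0}, -x ∈ {x | u x = 0} ∧ gaugeN C γ (-x) = gaugeN C γ x :=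
  fun x hx => ⟨by simpa using hx, G.gaugeN_neg hx⟩

end Single

variable {V1 V2 : Type*} [AddCommGroup V1] [Module ℝ V1] [AddCommGroup V2] [Module ℝ V2]
  {C1 : Set V1} {C2 : Set V2} {u1 : Module.Dual ℝ V1} {u2 : Module.Dual ℝ V2} {γ1 : V1} {γ2 : V2}

theorem minTensor_hasProjDecompLE (G1 : IsSymmetricGPT C1 u1 γ1) (G2 : IsSymmetricGPT C2 u2 γ2)
    {ω : V1 ⊗[ℝ] V2} (hω : ω ∈ minTensor C1 C2) :
    HasProjDecompLE {x | u1 x = 0} {y | u2 y = 0} (gaugeN C1 γ1) (gaugeN C2 γ2)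
      (map (kerProj u1 γ1) (kerProj u2 γ2) ω) (pairTensor u1 u2 ω) := by
  suffices minTensor C1 C2 ⊆ {ω | HasProjDecompLE {x | u1 x = 0} {y | u2 y = 0}
      (gaugeN C1 γ1) (gaugeN C2 γ2) (map (kerProj u1 γ1) (kerProj u2 γ2) ω)
      (pairTensor u1 u2 ω)} from this hω
  refine convexHull_min ?_ ?_
  · rintro _ ⟨a, ha, b, hb, rfl⟩
    refine ⟨1, fun _ => kerProj u1 γ1 a, fun _ => kerProj u2 γ2 b,
      fun _ => apply_kerProj G1.apply_center a, fun _ => apply_kerProj G2.apply_center b,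
      by simp, ?_⟩
    have ha' := gaugeN_kerProj_le (γ := γ1) G1.isConeSet G1.pos ha
    have hb' := gaugeN_kerProj_le (γ := γ2) G2.isConeSet G2.pos hb
    simpa using mul_le_mul ha' hb' (gaugeN_nonneg _ _ _) ((gaugeN_nonneg _ _ _).trans ha')
  · intro ω₁ h₁ ω₂ h₂ a b ha hb _
    simp only [Set.mem_ofPred_eq, map_add, map_smul, smul_eq_mul]
    exact (h₁.smul ha (fun x hx => by simp_all) fun x _ => gaugeN_smul ha x).add
      (h₂.smul hb (fun x hx => by simp_all) fun x _ => gaugeN_smul hb x)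

theorem tmul_add_mem_maxTensor (G1 : IsSymmetricGPT C1 u1 γ1) (G2 : IsSymmetricGPT C2 u2 γ2)
    {z : V1 ⊗[ℝ] V2} {s : ℝ}
    (hz : HasProjDecompLE {x | u1 x = 0} {y | u2 y = 0} (gaugeN C1 γ1) (gaugeN C2 γ2) z s)
    (hinj : injNormOn {x | u1 x = 0} {y | u2 y = 0} (gaugeN C1 γ1) (gaugeN C2 γ2) z ≤ 1) :
    γ1 ⊗ₜ[ℝ] γ2 + z ∈ maxTensor C1 C2 := by
  intro f hf g hg
  have hf' : ∀ x ∈ {x | u1 x = 0}, (-f) x ≤ f γ1 * gaugeN C1 γ1 x := fun x _ =>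
    neg_apply_le_mul_gaugeN hf G1.center_mem (G1.exists_pos_add_smul_mem x)
  have hg' : ∀ y ∈ {y | u2 y = 0}, g y ≤ g γ2 * gaugeN C2 γ2 y := fun y hy => by
    simpa [G2.gaugeN_neg hy] using
      neg_apply_le_mul_gaugeN hg G2.center_mem (G2.exists_pos_add_smul_mem (-y))
  have hfγ := hf γ1 G1.center_mem
  have hgγ := hg γ2 G2.center_mem
  have hbound := hz.pairTensor_le_mul_injNormOn G1.neg_mem_and_gaugeN_neg
    G2.neg_mem_and_gaugeN_neg hfγ hgγ hf' hg'
  rw [pairTensor_neg_left] at hbound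
  rw [map_add, pairTensor_tmul]
  linarith [mul_le_mul_of_nonneg_left hinj (mul_nonneg hfγ hgγ)]

theorem le_entRob (G1 : IsSymmetricGPT C1 u1 γ1) (G2 : IsSymmetricGPT C2 u2 γ2)
    {z : V1 ⊗[ℝ] V2} (hz : map (kerProj u1 γ1) (kerProj u2 γ2) z = z) :
    (projNormOn {x | u1 x = 0} {y | u2 y = 0} (gaugeN C1 γ1) (gaugeN C2 γ2) z - 1) / 2
      ≤ entRob C1 C2 u1 u2 (γ1 ⊗ₜ[ℝ] γ2 + z) := by
  have hγγ : γ1 ⊗ₜ[ℝ] γ2 ∈ minTensor C1 C2 := tmul_mem_minTensor G1.center_mem G2.center_mem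
  have hprojω : map (kerProj u1 γ1) (kerProj u2 γ2) (γ1 ⊗ₜ[ℝ] γ2 + z) = z := by
    simp [hz, G1.apply_center]
  have huω : pairTensor u1 u2 (γ1 ⊗ₜ[ℝ] γ2 + z) = 1 := by
    rw [map_add, pairTensor_tmul, G1.apply_center, G2.apply_center, ← hz,
      pairTensor_map_kerProj G1.apply_center G2.apply_center]
    norm_num
  apply le_csInf
  · obtain ⟨P, hP, Q, hQ, hPQ⟩ : z ∈ minTensor C1 C2 - minTensor C1 C2 :=
      minTensor_sub_eq_univ G1.isConeSet G1.sub_eq_univ G2.sub_eq_univ ▸ trivial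
    refine ⟨_, Q, hQ, ?_, rfl⟩
    rw [← hPQ, add_assoc, sub_add_cancel]
    exact minTensor_add_mem G1.isConeSet hγγ hP
  · rintro _ ⟨ζ, hζ, hωζ, rfl⟩
    have hdec := (minTensor_hasProjDecompLE G1 G2 hωζ).add
      ((minTensor_hasProjDecompLE G1 G2 hζ).neg G1.neg_mem_and_gaugeN_neg)
    rw [map_add _ (γ1 ⊗ₜ[ℝ] γ2 + z), hprojω, add_neg_cancel_right, map_add, huω] at hdec
    have := hdec.projNormOn_le (gaugeN_nonneg C1 γ1) (gaugeN_nonneg C2 γ2)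
    linarith

end IsSymmetricGPT

theorem stmt19_general {V1 V2 : Type*}
    [AddCommGroup V1] [Module ℝ V1]
    [AddCommGroup V2] [Module ℝ V2]
    (C1 : Set V1) (C2 : Set V2) (u1 : Module.Dual ℝ V1) (u2 : Module.Dual ℝ V2)
    (γ1 : V1) (γ2 : V2)
    (hC1 : IsProperCone C1) (hC2 : IsProperCone C2)
    (hu1 : ∀ x ∈ C1, x ≠ 0 → 0 < u1 x) (hu2 : ∀ x ∈ C2, x ≠ 0 → 0 < u2 x)
    (hγ1C : γ1 ∈ C1) (hγ1u : u1 γ1 = 1) (hγ2C : γ2 ∈ C2) (hγ2u : u2 γ2 = 1)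
    (hsym1 : ∀ ω ∈ C1, u1 ω = 1 → (2 : ℝ) • γ1 - ω ∈ C1)
    (hsym2 : ∀ ω ∈ C2, u2 ω = 1 → (2 : ℝ) • γ2 - ω ∈ C2)
    (z : V1 ⊗[ℝ] V2)
    (hz : ∃ (k : ℕ) (x : Fin k → V1) (y : Fin k → V2),
      (∀ i, u1 (x i) = 0) ∧ (∀ i, u2 (y i) = 0) ∧ z = ∑ i, x i ⊗ₜ[ℝ] y i)
    (hinj : injNormOn {x | u1 x = 0} {y | u2 y = 0}
      (gaugeN C1 γ1) (gaugeN C2 γ2) z ≤ 1) :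
    γ1 ⊗ₜ[ℝ] γ2 + z ∈ maxTensor C1 C2 ∧
    (projNormOn {x | u1 x = 0} {y | u2 y = 0} (gaugeN C1 γ1) (gaugeN C2 γ2) z - 1) / 2
      ≤ entRob C1 C2 u1 u2 (γ1 ⊗ₜ[ℝ] γ2 + z) := by
  have G1 : IsSymmetricGPT C1 u1 γ1 := ⟨hC1.1, hC1.2.2.1, hC1.2.2.2.2, hu1, hγ1C, hγ1u, hsym1⟩
  have G2 : IsSymmetricGPT C2 u2 γ2 := ⟨hC2.1, hC2.2.2.1, hC2.2.2.2.2, hu2, hγ2C, hγ2u, hsym2⟩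
  obtain ⟨k, x, y, hx, hy, hzxy⟩ := hz
  have hdec : HasProjDecompLE {x | u1 x = 0} {y | u2 y = 0} (gaugeN C1 γ1) (gaugeN C2 γ2) z
      (∑ i, gaugeN C1 γ1 (x i) * gaugeN C2 γ2 (y i)) := ⟨k, x, y, hx, hy, hzxy, le_rfl⟩
  exact ⟨G1.tmul_add_mem_maxTensor G2 hdec hinj, G1.le_entRob G2 hdec.map_kerProj⟩

/-- Lower bound on entanglement robustness for symmetric GPTs: if `z ∈ X1 ⊗ X2` has
injective norm at most 1, then `ω(z) = γ1 ⊗ γ2 + z` belongs to the maximal tensor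
product, and `E_rob(ω(z)) ≥ (‖z‖_π − 1)/2`. -/
theorem stmt19 {V1 V2 : Type*}
    [AddCommGroup V1] [Module ℝ V1] [FiniteDimensional ℝ V1]
    [AddCommGroup V2] [Module ℝ V2] [FiniteDimensional ℝ V2]
    (C1 : Set V1) (C2 : Set V2) (u1 : Module.Dual ℝ V1) (u2 : Module.Dual ℝ V2)
    (γ1 : V1) (γ2 : V2)
    (hC1 : IsProperCone C1) (hC2 : IsProperCone C2)
    (hu1 : ∀ x ∈ C1, x ≠ 0 → 0 < u1 x) (hu2 : ∀ x ∈ C2, x ≠ 0 → 0 < u2 x)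
    (hγ1C : γ1 ∈ C1) (hγ1u : u1 γ1 = 1) (hγ2C : γ2 ∈ C2) (hγ2u : u2 γ2 = 1)
    (hsym1 : ∀ ω ∈ C1, u1 ω = 1 → (2 : ℝ) • γ1 - ω ∈ C1)
    (hsym2 : ∀ ω ∈ C2, u2 ω = 1 → (2 : ℝ) • γ2 - ω ∈ C2)
    (z : V1 ⊗[ℝ] V2)
    (hz : ∃ (k : ℕ) (x : Fin k → V1) (y : Fin k → V2),
      (∀ i, u1 (x i) = 0) ∧ (∀ i, u2 (y i) = 0) ∧ z = ∑ i, x i ⊗ₜ[ℝ] y i)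
    (hinj : injNormOn {x | u1 x = 0} {y | u2 y = 0}
      (gaugeN C1 γ1) (gaugeN C2 γ2) z ≤ 1) :
    γ1 ⊗ₜ[ℝ] γ2 + z ∈ maxTensor C1 C2 ∧
    (projNormOn {x | u1 x = 0} {y | u2 y = 0} (gaugeN C1 γ1) (gaugeN C2 γ2) z - 1) / 2
      ≤ entRob C1 C2 u1 u2 (γ1 ⊗ₜ[ℝ] γ2 + z) :=
  stmt19_general C1 C2 u1 u2 γ1 γ2 hC1 hC2 hu1 hu2 hγ1C hγ1u hγ2C hγ2u hsym1 hsym2 z hz hinj
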